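/- arXiv:1309.1930 — 3 statements merged into one kernel-verified Lean document; each statement's English description precedes it below -/
import Mathlib

section
/- Fix ρ₀ > 0 and ρ ∈ (0, ρ₀]. For η ≥ 0, let R_η(z) = z/(1 + η z^{2/3}) for z ≥ 0 (so R₀(z) = z), extended continuously by R_η(z) = z for z < 0. Let η > 0 and suppose (x_η, y_η) and (x₀, y₀) are differentiable on (−∞,0], take nonnegative values there, solve respectively x' = y − x, y' = 2y − e^{2s} R_η(e^{−2s} y) x and x' = y − x, y' = 2y − e^{2s} R₀(e^{−2s} y) x, and both satisfy lim_{s→−∞} e^{−2s} y(s) = ρ and lim_{s→−∞} e^{−2s} x(s) = ρ/3. Then for all t ≤ 0: e^{−2t} |y_η(t) − y₀(t)| ≤ (η/6) ρ₀^{8/3} e^{ρ₀/3} and e^{−2t} |x_η(t) − x₀(t)| ≤ (η/18) ρ₀^{8/3} e^{ρ₀/3}. In particular, x_η → x₀ and y_η → y₀ uniformly on (−∞,0] as η → 0⁺. -/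
open Real Filter Set

/-- The simplified Fermi–Dirac nonlinearity `R_η(z) = z/(1 + η z^{2/3})` for
`z ≥ 0`, extended by `R_η(z) = z` for `z < 0`; `R₀(z) = z`. -/
noncomputable def Rfun (η z : ℝ) : ℝ :=
  if 0 ≤ z then z / (1 + η * z ^ ((2 : ℝ) / 3)) else z

/-!
In the variables `u = e^{-2s} y`, `v = e^{-2s} x` the system reads `u' = -e^{2s} R(u) v`,
`v' = u - 3v`. Nonnegativity makes `u` nonincreasing and `e^{3s} (v - ρ/3)` nonincreasing, so the
limits at `-∞` give `0 ≤ u ≤ ρ` and `0 ≤ v ≤ ρ/3`. For the differences `U = u_η - u_0`,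
`V = v_η - v_0` this, together with `z - R_η(z) ≤ η z^{5/3}`, gives
`|U'| ≤ e^{2s} (B + (ρ₀/3)(|U| + 3|V|))` with `B = η ρ₀^{8/3} / 3`. Let `D` be the primitive from
`-∞` of the right-hand side. Then `|U| ≤ D`, and since `(e^{3s} V)' = e^{3s} U` and `D` is
nondecreasing, also `3|V| ≤ D`. Hence `D' ≤ e^{2s} (B + (2ρ₀/3) D)`, and the integrating factor
`exp (-(ρ₀/3) e^{2s})` yields `D ≤ (B/2) e^{2s} exp ((ρ₀/3) e^{2s}) ≤ (B/2) e^{ρ₀/3}` on `(-∞, 0]`.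
-/

open Topology MeasureTheory

section Rfun

variable {η z : ℝ}

lemma Rfun_zero (z : ℝ) : Rfun 0 z = z := by
  unfold Rfun; split_ifs <;> simp

lemma Rfun_nonneg (hη : 0 ≤ η) (hz : 0 ≤ z) : 0 ≤ Rfun η z := by
  rw [Rfun, if_pos hz]
  positivity

lemma sub_Rfun_nonneg (hη : 0 ≤ η) (hz : 0 ≤ z) : 0 ≤ z - Rfun η z := by
  rw [Rfun, if_pos hz, sub_nonneg]
  exact div_le_self hz (le_add_of_nonneg_right (by positivity))

lemma sub_Rfun_le (hη : 0 ≤ η) (hz : 0 ≤ z) : z - Rfun η z ≤ η * z ^ ((5 : ℝ) / 3) := by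
  have hw : 0 ≤ η * z ^ ((2 : ℝ) / 3) := by positivity
  have h53 : z ^ ((5 : ℝ) / 3) = z * z ^ ((2 : ℝ) / 3) := by
    rw [show (5 : ℝ) / 3 = 1 + 2 / 3 by norm_num, rpow_add' hz (by norm_num), rpow_one]
  rw [Rfun, if_pos hz, h53, sub_div' (by positivity), div_le_iff₀ (by positivity)]
  nlinarith [mul_nonneg (mul_nonneg hz hw) hw]

end Rfun

lemma abs_mul_sub_Rfun_mul_le {η ρ₀ z w z₀ w₀ : ℝ} (hη : 0 ≤ η) (hz : z ∈ Icc 0 ρ₀)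
    (hw : w ∈ Icc 0 (ρ₀ / 3)) (hz₀ : z₀ ∈ Icc 0 ρ₀) :
    |z₀ * w₀ - Rfun η z * w| ≤ η * ρ₀ ^ ((8 : ℝ) / 3) / 3 + ρ₀ / 3 * (|z - z₀| + 3 * |w - w₀|) := by
  have hρ₀ : 0 ≤ ρ₀ := hz.1.trans hz.2
  have hdefect : (z - Rfun η z) * w ≤ η * ρ₀ ^ ((8 : ℝ) / 3) / 3 := by
    have h53 : z ^ ((5 : ℝ) / 3) ≤ ρ₀ ^ ((5 : ℝ) / 3) := rpow_le_rpow hz.1 hz.2 (by norm_num)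
    have h83 : ρ₀ ^ ((8 : ℝ) / 3) = ρ₀ ^ ((5 : ℝ) / 3) * ρ₀ := by
      rw [← rpow_add_one' hρ₀ (by norm_num)]; norm_num
    calc (z - Rfun η z) * w ≤ η * ρ₀ ^ ((5 : ℝ) / 3) * (ρ₀ / 3) :=
          mul_le_mul ((sub_Rfun_le hη hz.1).trans (by gcongr)) hw.2 hw.1 (by positivity)
      _ = η * ρ₀ ^ ((8 : ℝ) / 3) / 3 := by rw [h83]; ring
  have hwU : |w * (z - z₀)| ≤ ρ₀ / 3 * |z - z₀| := by
    rw [abs_mul, abs_of_nonneg hw.1]; gcongr; exact hw.2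
  have hz₀V : |z₀ * (w - w₀)| ≤ ρ₀ * |w - w₀| := by
    rw [abs_mul, abs_of_nonneg hz₀.1]; gcongr; exact hz₀.2
  have hsplit : z₀ * w₀ - Rfun η z * w = (z - Rfun η z) * w - w * (z - z₀) - z₀ * (w - w₀) := by
    ring
  have := mul_nonneg (sub_Rfun_nonneg hη hz.1) hw.1
  rw [hsplit, abs_le]
  constructor <;> linarith [abs_le.1 hwU, abs_le.1 hz₀V, abs_nonneg (w * (z - z₀)),
    abs_nonneg (z₀ * (w - w₀))]

lemma abs_sub_neg_mul_Rfun_le {η ρ₀ e z w z₀ w₀ : ℝ} (hη : 0 ≤ η) (he : 0 ≤ e)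
    (hz : z ∈ Icc 0 ρ₀) (hw : w ∈ Icc 0 (ρ₀ / 3)) (hz₀ : z₀ ∈ Icc 0 ρ₀) :
    |-(e * (Rfun η z * w)) - -(e * (Rfun 0 z₀ * w₀))| ≤
      e * (η * ρ₀ ^ ((8 : ℝ) / 3) / 3 + ρ₀ / 3 * (|z - z₀| + 3 * |w - w₀|)) := by
  rw [Rfun_zero, show -(e * (Rfun η z * w)) - -(e * (z₀ * w₀)) = e * (z₀ * w₀ - Rfun η z * w) by
    ring, abs_mul, abs_of_nonneg he]
  exact mul_le_mul_of_nonneg_left (abs_mul_sub_Rfun_mul_le hη hz hw hz₀) he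

section Exp

variable {f : ℝ → ℝ} {f' k t : ℝ} {S : Set ℝ}

lemma hasDerivAt_exp_mul (k t : ℝ) :
    HasDerivAt (fun s => exp (k * s)) (k * exp (k * t)) t := by
  simpa [mul_comm] using ((hasDerivAt_id t).const_mul k).exp

lemma hasDerivWithinAt_exp_mul_mul (k : ℝ) (hf : HasDerivWithinAt f f' S t) :
    HasDerivWithinAt (fun s => exp (k * s) * f s) (exp (k * t) * (f' + k * f t)) S t :=
  ((hasDerivAt_exp_mul k t).hasDerivWithinAt.mul hf).congr_deriv (by ring)

lemma tendsto_exp_mul_atBot (hk : 0 < k) : Tendsto (fun s => exp (k * s)) atBot (𝓝 0) :=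
  tendsto_exp_atBot.comp (tendsto_id.const_mul_atBot hk)

end Exp

section HalfLine

variable {f f' g g' : ℝ → ℝ} {a : ℝ}

lemma monotoneOn_Iic_of_hasDerivWithinAt_nonneg
    (hf : ∀ s ≤ a, HasDerivWithinAt f (f' s) (Iic a) s) (hf' : ∀ s ≤ a, 0 ≤ f' s) :
    MonotoneOn f (Iic a) := by
  refine monotoneOn_of_hasDerivWithinAt_nonneg (f' := f') (convex_Iic a)
    (fun s hs => (hf s hs).continuousWithinAt) (fun s hs => ?_) (fun s hs => ?_)
  all_goals rw [interior_Iic] at hs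
  · exact ((hf s hs.le).hasDerivAt (Iic_mem_nhds hs)).hasDerivWithinAt
  · exact hf' s hs.le

lemma le_of_hasDerivWithinAt_nonneg_of_tendsto_atBot {L : ℝ}
    (hf : ∀ s ≤ a, HasDerivWithinAt f (f' s) (Iic a) s) (hf' : ∀ s ≤ a, 0 ≤ f' s)
    (hL : Tendsto f atBot (𝓝 L)) {t : ℝ} (ht : t ≤ a) : L ≤ f t := by
  refine le_of_tendsto hL ?_
  filter_upwards [eventually_le_atBot t] with s hs
  exact monotoneOn_Iic_of_hasDerivWithinAt_nonneg hf hf' (hs.trans ht) ht hs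

lemma le_of_hasDerivWithinAt_nonpos_of_tendsto_atBot {L : ℝ}
    (hf : ∀ s ≤ a, HasDerivWithinAt f (f' s) (Iic a) s) (hf' : ∀ s ≤ a, f' s ≤ 0)
    (hL : Tendsto f atBot (𝓝 L)) {t : ℝ} (ht : t ≤ a) : f t ≤ L :=
  neg_le_neg_iff.1 <| le_of_hasDerivWithinAt_nonneg_of_tendsto_atBot
    (fun s hs => (hf s hs).neg) (fun s hs => neg_nonneg.2 (hf' s hs)) hL.neg ht

lemma abs_le_of_abs_deriv_le_of_tendsto_atBot
    (hf : ∀ s ≤ a, HasDerivWithinAt f (f' s) (Iic a) s)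
    (hg : ∀ s ≤ a, HasDerivWithinAt g (g' s) (Iic a) s) (hfg : ∀ s ≤ a, |f' s| ≤ g' s)
    (hf0 : Tendsto f atBot (𝓝 0)) (hg0 : Tendsto g atBot (𝓝 0)) {t : ℝ} (ht : t ≤ a) :
    |f t| ≤ g t := by
  have hsub := le_of_hasDerivWithinAt_nonneg_of_tendsto_atBot (f := fun s => g s - f s)
    (fun s hs => (hg s hs).sub (hf s hs)) (fun s hs => by linarith [le_abs_self (f' s), hfg s hs])
    (by simpa using hg0.sub hf0) ht
  have hadd := le_of_hasDerivWithinAt_nonneg_of_tendsto_atBot (f := fun s => g s + f s)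
    (fun s hs => (hg s hs).add (hf s hs)) (fun s hs => by linarith [neg_abs_le (f' s), hfg s hs])
    (by simpa using hg0.add hf0) ht
  exact abs_le.2 ⟨by linarith, by linarith⟩

lemma hasDerivWithinAt_integral_Iic (hg : ContinuousOn g (Iic a))
    (hgi : IntegrableOn g (Iic a)) {t : ℝ} (ht : t ≤ a) :
    HasDerivWithinAt (fun τ => ∫ s in Iic τ, g s) (g t) (Iic a) t := by
  have hmeas : AEStronglyMeasurable g (volume.restrict (Iic a)) :=
    hg.aestronglyMeasurable measurableSet_Iic
  have hprim : HasDerivWithinAt (fun τ => ∫ s in a..τ, g s) (g t) (Iic a) t := by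
    rcases ht.eq_or_lt with rfl | hlt
    · exact intervalIntegral.integral_hasDerivWithinAt_right (by simp)
        ⟨Iic t, self_mem_nhdsWithin, hmeas⟩ (hg t self_mem_Iic)
    · have hii : IntervalIntegrable g volume a t :=
        (hgi.mono_set (by rw [uIcc_of_ge ht]; exact Icc_subset_Iic_self)).intervalIntegrable
      exact (intervalIntegral.integral_hasDerivAt_right hii ⟨Iic a, Iic_mem_nhds hlt, hmeas⟩
        ((hg t ht).continuousAt (Iic_mem_nhds hlt))).hasDerivWithinAt
  have hsplit : ∀ τ ≤ a, ∫ s in Iic τ, g s = (∫ s in Iic a, g s) + ∫ s in a..τ, g s := by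
    intro τ hτ
    rw [← intervalIntegral.integral_Iic_sub_Iic hgi (hgi.mono_set (Iic_subset_Iic.2 hτ)),
      add_sub_cancel]
  exact (hprim.const_add _).congr hsplit (hsplit t ht)

lemma integrableOn_Iic_of_abs_le_exp {k C : ℝ} (hk : 0 < k) (hg : ContinuousOn g (Iic a))
    (hgC : ∀ s ≤ a, |g s| ≤ C * exp (k * s)) : IntegrableOn g (Iic a) := by
  refine Integrable.mono' ((integrableOn_exp_mul_Iic hk a).const_mul C)
    (hg.aestronglyMeasurable measurableSet_Iic) ?_
  rw [ae_restrict_iff' measurableSet_Iic]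
  exact Eventually.of_forall hgC

end HalfLine

lemma le_of_hasDerivWithinAt_le_exp_mul {D D' : ℝ → ℝ} {a k B c : ℝ} (hk : 0 < k)
    (hB : 0 ≤ B) (hc : 0 ≤ c) (hD : ∀ s ≤ a, HasDerivWithinAt D (D' s) (Iic a) s)
    (hD' : ∀ s ≤ a, D' s ≤ exp (k * s) * (B + c * D s)) (hD0 : Tendsto D atBot (𝓝 0))
    {t : ℝ} (ht : t ≤ a) : D t ≤ B / k * exp (k * t) * exp (c / k * exp (k * t)) := by
  -- `w` is the integrating factor of `D' = exp (k s) * (B + c D)`.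
  set w : ℝ → ℝ := fun s => exp (-(c / k) * exp (k * s))
  have hw : ∀ s, HasDerivAt w (w s * (-(c / k) * (k * exp (k * s)))) s := fun s =>
    ((hasDerivAt_exp_mul k s).const_mul _).exp
  have hw1 : ∀ s, w s ≤ 1 := fun s =>
    exp_le_one_iff.2 (mul_nonpos_of_nonpos_of_nonneg (by simp only [neg_nonpos]; positivity)
      (exp_pos _).le)
  have hψ : ∀ s ≤ a, HasDerivWithinAt (fun s => w s * D s - B / k * exp (k * s))
      (w s * (D' s - c * exp (k * s) * D s) - B * exp (k * s)) (Iic a) s := fun s hs =>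
    (((hw s).hasDerivWithinAt.mul (hD s hs)).sub
      ((hasDerivAt_exp_mul k s).const_mul (B / k)).hasDerivWithinAt).congr_deriv
      (by field_simp; ring)
  have hψ' : ∀ s ≤ a, w s * (D' s - c * exp (k * s) * D s) - B * exp (k * s) ≤ 0 := by
    intro s hs
    have hws : 0 < w s := exp_pos _
    have := mul_le_mul_of_nonneg_left (hD' s hs) hws.le
    nlinarith [mul_le_mul_of_nonneg_right (hw1 s) (mul_nonneg hB (exp_pos (k * s)).le)]
  have hw0 : Tendsto w atBot (𝓝 1) := by
    have h := (tendsto_exp_mul_atBot hk).const_mul (-(c / k))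
    rw [mul_zero] at h
    exact exp_zero ▸ (continuous_exp.tendsto 0).comp h
  have hψ0 : Tendsto (fun s => w s * D s - B / k * exp (k * s)) atBot (𝓝 0) := by
    simpa using (hw0.mul hD0).sub ((tendsto_exp_mul_atBot hk).const_mul (B / k))
  have hψt := le_of_hasDerivWithinAt_nonpos_of_tendsto_atBot hψ hψ' hψ0 ht
  have hwt : w t * exp (c / k * exp (k * t)) = 1 := by rw [← exp_add]; simp
  calc D t = w t * D t * exp (c / k * exp (k * t)) := by rw [mul_right_comm, hwt, one_mul]
    _ ≤ B / k * exp (k * t) * exp (c / k * exp (k * t)) :=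
      mul_le_mul_of_nonneg_right (by linarith) (exp_pos _).le

lemma three_mul_abs_le_of_hasDerivWithinAt_sub_three_mul {U V D D' : ℝ → ℝ} {a M : ℝ}
    (hV : ∀ s ≤ a, HasDerivWithinAt V (U s - 3 * V s) (Iic a) s)
    (hD : ∀ s ≤ a, HasDerivWithinAt D (D' s) (Iic a) s) (hD' : ∀ s ≤ a, 0 ≤ D' s)
    (hUD : ∀ s ≤ a, |U s| ≤ D s) (hVM : ∀ s ≤ a, |V s| ≤ M) (hD0 : Tendsto D atBot (𝓝 0))
    {t : ℝ} (ht : t ≤ a) : 3 * |V t| ≤ D t := by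
  -- Compare `exp (3 s) * V s`, whose derivative is `exp (3 s) * U s`, with `exp (3 s) * D s / 3`.
  have hf0 : Tendsto (fun s => exp (3 * s) * V s) atBot (𝓝 0) := by
    have h := (tendsto_exp_mul_atBot three_pos).mul_const M
    rw [zero_mul] at h
    refine squeeze_zero_norm' ?_ h
    filter_upwards [eventually_le_atBot a] with s hs
    rw [norm_mul, norm_of_nonneg (exp_pos _).le]
    exact mul_le_mul_of_nonneg_left (hVM s hs) (exp_pos _).le
  have hG0 : Tendsto (fun s => exp (3 * s) * (D s / 3)) atBot (𝓝 0) := by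
    simpa using (tendsto_exp_mul_atBot three_pos).mul (hD0.div_const 3)
  have hcmp := abs_le_of_abs_deriv_le_of_tendsto_atBot
    (fun s hs => hasDerivWithinAt_exp_mul_mul 3 (hV s hs))
    (fun s hs => hasDerivWithinAt_exp_mul_mul 3 ((hD s hs).div_const 3))
    (fun s hs => by
      rw [abs_mul, abs_of_pos (exp_pos _), sub_add_cancel]
      exact mul_le_mul_of_nonneg_left (by linarith [hUD s hs, hD' s hs]) (exp_pos _).le)
    hf0 hG0 ht
  rw [abs_mul, abs_of_pos (exp_pos _)] at hcmp
  linarith [le_of_mul_le_mul_left hcmp (exp_pos (3 * t))]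

lemma abs_le_of_hasDerivWithinAt_coupled {U U' V : ℝ → ℝ} {a B c M : ℝ} (hB : 0 ≤ B)
    (hc : 0 ≤ c) (hU : ∀ s ≤ a, HasDerivWithinAt U (U' s) (Iic a) s)
    (hV : ∀ s ≤ a, HasDerivWithinAt V (U s - 3 * V s) (Iic a) s)
    (hU' : ∀ s ≤ a, |U' s| ≤ exp (2 * s) * (B + c * (|U s| + 3 * |V s|)))
    (hUM : ∀ s ≤ a, |U s| ≤ M) (hVM : ∀ s ≤ a, |V s| ≤ M) (hU0 : Tendsto U atBot (𝓝 0))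
    {t : ℝ} (ht : t ≤ a) :
    |U t| ≤ B / 2 * exp (2 * t) * exp (c * exp (2 * t)) ∧
      3 * |V t| ≤ B / 2 * exp (2 * t) * exp (c * exp (2 * t)) := by
  set g : ℝ → ℝ := fun s => exp (2 * s) * (B + c * (|U s| + 3 * |V s|))
  have hg0 : ∀ s ≤ a, 0 ≤ g s := fun s _ => by positivity
  have hgc : ContinuousOn g (Iic a) := by
    have hUc : ContinuousOn U (Iic a) := fun s hs => (hU s hs).continuousWithinAt
    have hVc : ContinuousOn V (Iic a) := fun s hs => (hV s hs).continuousWithinAt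
    fun_prop
  have hgi : IntegrableOn g (Iic a) := by
    refine integrableOn_Iic_of_abs_le_exp (C := B + c * (M + 3 * M)) two_pos hgc fun s hs => ?_
    rw [abs_of_nonneg (hg0 s hs), mul_comm _ (exp (2 * s))]
    simp only [g]
    gcongr
    exacts [hUM s hs, hVM s hs]
  set D : ℝ → ℝ := fun t => ∫ s in Iic t, g s
  have hD : ∀ s ≤ a, HasDerivWithinAt D (g s) (Iic a) s := fun s hs =>
    hasDerivWithinAt_integral_Iic hgc hgi hs
  have hD0 : Tendsto D atBot (𝓝 0) := tendsto_integral_Iic_zero tendsto_id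
  have hUD : ∀ s ≤ a, |U s| ≤ D s := fun s hs =>
    abs_le_of_abs_deriv_le_of_tendsto_atBot hU hD hU' hU0 hD0 hs
  have hVD : ∀ s ≤ a, 3 * |V s| ≤ D s := fun s hs =>
    three_mul_abs_le_of_hasDerivWithinAt_sub_three_mul hV hD hg0 hUD hVM hD0 hs
  have hDt := le_of_hasDerivWithinAt_le_exp_mul two_pos hB (mul_nonneg two_pos.le hc) hD
    (fun s hs => by
      have : |U s| + 3 * |V s| ≤ 2 * D s := by linarith [hUD s hs, hVD s hs]
      exact mul_le_mul_of_nonneg_left (by nlinarith [mul_le_mul_of_nonneg_left this hc])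
        (exp_pos _).le) hD0 ht
  rw [mul_div_cancel_left₀ c two_ne_zero] at hDt
  exact ⟨(hUD t ht).trans hDt, (hVD t ht).trans hDt⟩

noncomputable def rescale (f : ℝ → ℝ) (s : ℝ) : ℝ := exp (-2 * s) * f s

section Rescale

variable {R x y : ℝ → ℝ} {a s : ℝ} {S : Set ℝ}

lemma hasDerivWithinAt_rescale_x (hx : HasDerivWithinAt x (y s - x s) S s) :
    HasDerivWithinAt (rescale x) (rescale y s - 3 * rescale x s) S s :=
  (hasDerivWithinAt_exp_mul_mul (-2) hx).congr_deriv (by simp only [rescale]; ring)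

lemma hasDerivWithinAt_rescale_y
    (hy : HasDerivWithinAt y (2 * y s - exp (2 * s) * R (exp (-2 * s) * y s) * x s) S s) :
    HasDerivWithinAt (rescale y) (-(exp (2 * s) * (R (rescale y s) * rescale x s))) S s :=
  (hasDerivWithinAt_exp_mul_mul (-2) hy).congr_deriv (by simp only [rescale]; ring)

lemma rescale_mem_Icc_of_system {ρ : ℝ} (hR : ∀ z, 0 ≤ z → 0 ≤ R z)
    (hx : ∀ s ≤ a, HasDerivWithinAt x (y s - x s) (Iic a) s)
    (hy : ∀ s ≤ a, HasDerivWithinAt y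
      (2 * y s - exp (2 * s) * R (exp (-2 * s) * y s) * x s) (Iic a) s)
    (hpos : ∀ s ≤ a, 0 ≤ x s ∧ 0 ≤ y s) (hylim : Tendsto (rescale y) atBot (𝓝 ρ))
    (hxlim : Tendsto (rescale x) atBot (𝓝 (ρ / 3))) {t : ℝ} (ht : t ≤ a) :
    rescale y t ∈ Icc 0 ρ ∧ rescale x t ∈ Icc 0 (ρ / 3) := by
  have hv0 : ∀ s ≤ a, 0 ≤ rescale x s := fun s hs => mul_nonneg (exp_pos _).le (hpos s hs).1
  have hu0 : ∀ s ≤ a, 0 ≤ rescale y s := fun s hs => mul_nonneg (exp_pos _).le (hpos s hs).2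
  have hu : ∀ s ≤ a, rescale y s ≤ ρ := fun s hs =>
    le_of_hasDerivWithinAt_nonpos_of_tendsto_atBot
      (fun s hs => hasDerivWithinAt_rescale_y (hy s hs))
      (fun s hs => neg_nonpos.2 (mul_nonneg (exp_pos _).le
        (mul_nonneg (hR _ (hu0 s hs)) (hv0 s hs)))) hylim hs
  -- `exp (3 s) * (v - ρ / 3)` has derivative `exp (3 s) * (u - ρ) ≤ 0` and tends to `0`.
  have hw := le_of_hasDerivWithinAt_nonpos_of_tendsto_atBot
    (fun s hs => hasDerivWithinAt_exp_mul_mul 3 ((hasDerivWithinAt_rescale_x (hx s hs)).sub_const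
      (ρ / 3)))
    (fun s hs => mul_nonpos_of_nonneg_of_nonpos (exp_pos _).le (by linarith [hu s hs]))
    (by simpa using (tendsto_exp_mul_atBot three_pos).mul (hxlim.sub_const (ρ / 3))) ht
  exact ⟨⟨hu0 t ht, hu t ht⟩, ⟨hv0 t ht,
    sub_nonpos.1 (nonpos_of_mul_nonpos_right hw (exp_pos _))⟩⟩

end Rescale

/-- quantitative comparison between solutions of the simplified
Fermi–Dirac system (`η > 0`) and of the Maxwell–Boltzmann system (`η = 0`),
having identical limiting behavior `e^{−2s} y → ρ`, `e^{−2s} x → ρ/3` as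
`s → −∞`, with `0 < ρ ≤ ρ₀`:
`e^{−2t}|y_η − y₀| ≤ (η/6) ρ₀^{8/3} e^{ρ₀/3}` and
`e^{−2t}|x_η − x₀| ≤ (η/18) ρ₀^{8/3} e^{ρ₀/3}` on `(−∞,0]`.
In particular `(x_η, y_η) → (x₀, y₀)` uniformly on `(−∞,0]` as `η → 0⁺`. -/
theorem sfd_to_mb_uniform_estimate (ρ₀ ρ η : ℝ) (hρ₀ : 0 < ρ₀)
    (hρ : ρ ∈ Set.Ioc 0 ρ₀) (hη : 0 < η)
    (xη yη x₀ y₀ : ℝ → ℝ)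
    (hxη : ∀ s ≤ (0 : ℝ), HasDerivWithinAt xη (yη s - xη s) (Set.Iic 0) s)
    (hyη : ∀ s ≤ (0 : ℝ), HasDerivWithinAt yη
      (2 * yη s - Real.exp (2 * s) * Rfun η (Real.exp (-2 * s) * yη s) * xη s)
      (Set.Iic 0) s)
    (hx₀ : ∀ s ≤ (0 : ℝ), HasDerivWithinAt x₀ (y₀ s - x₀ s) (Set.Iic 0) s)
    (hy₀ : ∀ s ≤ (0 : ℝ), HasDerivWithinAt y₀
      (2 * y₀ s - Real.exp (2 * s) * Rfun 0 (Real.exp (-2 * s) * y₀ s) * x₀ s)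
      (Set.Iic 0) s)
    (hηpos : ∀ s ≤ (0 : ℝ), 0 ≤ xη s ∧ 0 ≤ yη s)
    (h₀pos : ∀ s ≤ (0 : ℝ), 0 ≤ x₀ s ∧ 0 ≤ y₀ s)
    (hyηlim : Filter.Tendsto (fun s => Real.exp (-2 * s) * yη s) Filter.atBot (nhds ρ))
    (hxηlim : Filter.Tendsto (fun s => Real.exp (-2 * s) * xη s) Filter.atBot (nhds (ρ / 3)))
    (hy₀lim : Filter.Tendsto (fun s => Real.exp (-2 * s) * y₀ s) Filter.atBot (nhds ρ))
    (hx₀lim : Filter.Tendsto (fun s => Real.exp (-2 * s) * x₀ s) Filter.atBot (nhds (ρ / 3))) :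
    ∀ t ≤ (0 : ℝ),
      Real.exp (-2 * t) * |yη t - y₀ t| ≤
        η / 6 * ρ₀ ^ ((8 : ℝ) / 3) * Real.exp (ρ₀ / 3) ∧
      Real.exp (-2 * t) * |xη t - x₀ t| ≤
        η / 18 * ρ₀ ^ ((8 : ℝ) / 3) * Real.exp (ρ₀ / 3) := by
  intro t ht
  have hρ₃ : ρ / 3 ≤ ρ₀ / 3 := by linarith [hρ.2]
  have hbη := fun s (hs : s ≤ 0) => rescale_mem_Icc_of_system
    (fun _ hz => Rfun_nonneg hη.le hz) hxη hyη hηpos hyηlim hxηlim hs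
  have hb₀ := fun s (hs : s ≤ 0) => rescale_mem_Icc_of_system
    (fun _ hz => Rfun_nonneg le_rfl hz) hx₀ hy₀ h₀pos hy₀lim hx₀lim hs
  have hdiff := abs_le_of_hasDerivWithinAt_coupled (U := fun s => rescale yη s - rescale y₀ s)
    (V := fun s => rescale xη s - rescale x₀ s) (B := η * ρ₀ ^ ((8 : ℝ) / 3) / 3)
    (c := ρ₀ / 3) (M := ρ) (by positivity) (by positivity)
    (fun s hs => (hasDerivWithinAt_rescale_y (hyη s hs)).sub
      (hasDerivWithinAt_rescale_y (hy₀ s hs)))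
    (fun s hs => ((hasDerivWithinAt_rescale_x (hxη s hs)).sub
      (hasDerivWithinAt_rescale_x (hx₀ s hs))).congr_deriv (by ring))
    (fun s hs => abs_sub_neg_mul_Rfun_le hη.le (exp_pos _).le
      (Icc_subset_Icc_right hρ.2 (hbη s hs).1) (Icc_subset_Icc_right hρ₃ (hbη s hs).2)
      (Icc_subset_Icc_right hρ.2 (hb₀ s hs).1))
    (fun s hs => (abs_sub_le_of_le_of_le (hbη s hs).1.1 (hbη s hs).1.2 (hb₀ s hs).1.1
      (hb₀ s hs).1.2).trans_eq (sub_zero ρ))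
    (fun s hs => (abs_sub_le_of_le_of_le (hbη s hs).2.1 (hbη s hs).2.2 (hb₀ s hs).2.1
      (hb₀ s hs).2.2).trans (by linarith [hρ.1]))
    (sub_self ρ ▸ hyηlim.sub hy₀lim) ht
  have hexp : exp (2 * t) ≤ 1 := exp_le_one_iff.2 (by linarith)
  have hbound : η * ρ₀ ^ ((8 : ℝ) / 3) / 3 / 2 * exp (2 * t) * exp (ρ₀ / 3 * exp (2 * t)) ≤
      η / 6 * ρ₀ ^ ((8 : ℝ) / 3) * exp (ρ₀ / 3) := by
    calc _ ≤ η * ρ₀ ^ ((8 : ℝ) / 3) / 3 / 2 * 1 * exp (ρ₀ / 3 * 1) := by gcongr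
      _ = _ := by ring_nf
  simp only [rescale, ← mul_sub, abs_mul, abs_of_pos (exp_pos _)] at hdiff
  constructor <;> linarith [hdiff.1, hdiff.2]
end

section
/- There exists a constant C > 0 such that for every η > 0 and μ > 0 with μ² η³ = 8/3, the function R(z) = (μ/4) f_{−1/2}(f_{1/2}^{−1}(2z/μ)) satisfies 0 ≤ z − R(z) ≤ C η z^{5/3} for all z > 0. Equivalently, the function w ↦ [w − (1/√6) f_{−1/2}(f_{1/2}^{−1}((√6/2) w))] / w^{5/3} is nonnegative and bounded on (0,∞). -/
/-!
Write `g(x) = 1 / (1 + e^{x - t})`, so that `f_α(t) = ∫₀^∞ x^α g` and `g' = -g (1 - g)`.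
Integrating `x^{1/2} g` by parts gives `f_{1/2}(t) - ½ f_{-1/2}(t) = ∫₀^∞ x^{1/2} g²`; hence, as
`z = μ f_{1/2}(t) / 2`, we get `z - R(z) = (μ/2) ∫₀^∞ x^{1/2} g² ≥ 0`. On `x ≥ 0` we have
`s e^{-x} ≤ g(x) ≤ s` with `s = g(0) ≤ 1`. The upper bound gives `z - R(z) ≤ s z`, the lower one
`Γ(3/2) s ≤ f_{1/2}(t) = 2z/μ`. So `s³ ≤ s² ≤ 16 z² / (π μ²) = (6/π) η³ z²`, that is
`s z ≤ (6/π)^{1/3} η z^{5/3}`.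
-/

open Real Filter Set

/-- The Fermi function `f_α(z) = ∫₀^∞ x^α / (1 + exp(x − z)) dx`. -/
noncomputable def fermi (α z : ℝ) : ℝ :=
  ∫ x in Set.Ioi (0 : ℝ), x ^ α / (1 + Real.exp (x - z))

open MeasureTheory Topology

noncomputable def fermiDirac (t x : ℝ) : ℝ := (1 + exp (x - t))⁻¹

lemma fermi_eq_integral (α t : ℝ) :
    fermi α t = ∫ x in Ioi (0 : ℝ), x ^ α * fermiDirac t x := by
  simp only [fermi, fermiDirac, div_eq_mul_inv]

namespace fermiDirac

variable (t : ℝ)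

lemma pos (x : ℝ) : 0 < fermiDirac t x := by unfold fermiDirac; positivity

lemma le_one (x : ℝ) : fermiDirac t x ≤ 1 :=
  inv_le_one_of_one_le₀ (by linarith [exp_pos (x - t)])

lemma le_exp_sub (x : ℝ) : fermiDirac t x ≤ exp (t - x) := by
  rw [fermiDirac, show t - x = -(x - t) by ring, exp_neg]
  exact inv_anti₀ (exp_pos _) (by linarith [exp_pos (x - t)])

lemma antitone : Antitone (fermiDirac t) :=
  fun _ _ hxy => inv_anti₀ (by positivity) (by gcongr)

lemma zero_mul_exp_neg_le {x : ℝ} (hx : 0 ≤ x) :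
    fermiDirac t 0 * exp (-x) ≤ fermiDirac t x := by
  rw [fermiDirac, fermiDirac, exp_neg, ← mul_inv]
  refine inv_anti₀ (by positivity) ?_
  have h : exp (0 - t) * exp x = exp (x - t) := by rw [← exp_add]; ring_nf
  nlinarith [one_le_exp hx]

lemma hasDerivAt (x : ℝ) :
    HasDerivAt (fermiDirac t) (-(fermiDirac t x * (1 - fermiDirac t x))) x := by
  have h : HasDerivAt (fun y => 1 + exp (y - t)) (exp (x - t)) x := by
    simpa using ((hasDerivAt_id x).sub_const t).exp.const_add 1
  refine (h.inv (by positivity)).congr_deriv ?_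
  rw [fermiDirac]
  field_simp
  ring

lemma continuous : Continuous (fermiDirac t) :=
  continuous_iff_continuousAt.2 fun x => (hasDerivAt t x).continuousAt

lemma integrableOn_rpow_mul {q : ℝ} (hq : -1 < q) :
    IntegrableOn (fun x => x ^ q * fermiDirac t x) (Ioi 0) := by
  have hdom : IntegrableOn (fun x => exp t * (exp (-x) * x ^ q)) (Ioi 0) := by
    simpa [IntegrableOn] using
      (GammaIntegral_convergent (s := q + 1) (by linarith)).const_mul (exp t)
  refine hdom.mono'
    ((measurable_id.pow_const q).mul (continuous t).measurable).aestronglyMeasurable ?_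
  filter_upwards [ae_restrict_mem measurableSet_Ioi] with x hx
  rw [norm_of_nonneg (mul_nonneg (rpow_nonneg hx.le q) (pos t x).le)]
  calc x ^ q * fermiDirac t x ≤ x ^ q * exp (t - x) :=
        mul_le_mul_of_nonneg_left (le_exp_sub t x) (rpow_nonneg hx.le q)
    _ = exp t * (exp (-x) * x ^ q) := by rw [sub_eq_add_neg, exp_add]; ring

lemma tendsto_rpow_mul (α : ℝ) :
    Tendsto (fun x => x ^ α * fermiDirac t x) atTop (𝓝 0) := by
  have hdom := (tendsto_rpow_mul_exp_neg_mul_atTop_nhds_zero α 1 one_pos).const_mul (exp t)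
  rw [mul_zero] at hdom
  refine squeeze_zero' ?_ ?_ hdom
  · filter_upwards [eventually_ge_atTop 0] with x hx
    exact mul_nonneg (rpow_nonneg hx α) (pos t x).le
  · filter_upwards [eventually_ge_atTop 0] with x hx
    calc x ^ α * fermiDirac t x ≤ x ^ α * exp (t - x) :=
          mul_le_mul_of_nonneg_left (le_exp_sub t x) (rpow_nonneg hx α)
      _ = exp t * (x ^ α * exp (-1 * x)) := by rw [sub_eq_add_neg, exp_add]; ring_nf

lemma integrableOn_rpow_mul_mul {q : ℝ} (hq : -1 < q) {h : ℝ → ℝ} (hh : Continuous h)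
    (hb : ∀ x, ‖h x‖ ≤ 1) :
    IntegrableOn (fun x => x ^ q * fermiDirac t x * h x) (Ioi 0) :=
  (integrableOn_rpow_mul t hq).mul_bdd hh.aestronglyMeasurable (ae_of_all _ hb)

lemma integrableOn_rpow_mul_mul_one_sub {q : ℝ} (hq : -1 < q) :
    IntegrableOn (fun x => x ^ q * fermiDirac t x * (1 - fermiDirac t x)) (Ioi 0) :=
  integrableOn_rpow_mul_mul t hq (h := fun x => 1 - fermiDirac t x)
    (continuous_const.sub (continuous t))
    (fun x => by rw [norm_of_nonneg (sub_nonneg.2 (le_one t x))]; linarith [pos t x])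

end fermiDirac

section

open fermiDirac

lemma mul_fermi_sub_one {α : ℝ} (hα : 0 < α) (t : ℝ) :
    α * fermi (α - 1) t =
      ∫ x in Ioi (0 : ℝ), x ^ α * fermiDirac t x * (1 - fermiDirac t x) := by
  have hderiv : ∀ x ∈ Ioi (0 : ℝ), HasDerivAt (fun y => y ^ α * fermiDirac t y)
      (α * (x ^ (α - 1) * fermiDirac t x) - x ^ α * fermiDirac t x * (1 - fermiDirac t x)) x :=
    fun x hx => ((hasDerivAt_rpow_const (Or.inl hx.ne')).mul (hasDerivAt t x)).congr_deriv
      (by ring)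
  have hcont : ContinuousWithinAt (fun y => y ^ α * fermiDirac t y) (Ici 0) 0 :=
    ((continuousAt_rpow_const 0 α (Or.inr hα.le)).mul
      (continuous t).continuousAt).continuousWithinAt
  have hint₁ := (integrableOn_rpow_mul t (show -1 < α - 1 by linarith)).const_mul α
  have hint₂ := integrableOn_rpow_mul_mul_one_sub t (show -1 < α by linarith)
  have h := integral_Ioi_of_hasDerivAt_of_tendsto hcont hderiv (hint₁.sub hint₂)
    (tendsto_rpow_mul t α)
  rw [integral_sub hint₁ hint₂, integral_const_mul, zero_rpow hα.ne', zero_mul, sub_zero,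
    sub_eq_zero] at h
  rw [fermi_eq_integral, h]

lemma fermi_sub_mul_fermi_sub_one {α : ℝ} (hα : 0 < α) (t : ℝ) :
    fermi α t - α * fermi (α - 1) t = ∫ x in Ioi (0 : ℝ), x ^ α * fermiDirac t x ^ 2 := by
  rw [mul_fermi_sub_one hα, fermi_eq_integral, ← integral_sub
    (integrableOn_rpow_mul t (by linarith)) (integrableOn_rpow_mul_mul_one_sub t (by linarith))]
  congr 1 with x
  ring

lemma integral_rpow_mul_fermiDirac_sq_le {α : ℝ} (hα : -1 < α) (t : ℝ) :
    ∫ x in Ioi (0 : ℝ), x ^ α * fermiDirac t x ^ 2 ≤ fermiDirac t 0 * fermi α t := by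
  have hint := integrableOn_rpow_mul_mul t hα (h := fermiDirac t) (continuous t)
    (fun x => by rw [norm_of_nonneg (pos t x).le]; exact le_one t x)
  rw [fermi_eq_integral, ← integral_const_mul]
  refine setIntegral_mono_on (hint.congr_fun (fun x _ => by ring) measurableSet_Ioi)
    ((integrableOn_rpow_mul t hα).const_mul _) measurableSet_Ioi fun x hx => ?_
  calc x ^ α * fermiDirac t x ^ 2 = x ^ α * fermiDirac t x * fermiDirac t x := by ring
    _ ≤ x ^ α * fermiDirac t x * fermiDirac t 0 :=
        mul_le_mul_of_nonneg_left (antitone t (le_of_lt hx))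
          (mul_nonneg (rpow_nonneg (le_of_lt hx) α) (pos t x).le)
    _ = fermiDirac t 0 * (x ^ α * fermiDirac t x) := by ring

lemma Gamma_mul_fermiDirac_zero_le_fermi {α : ℝ} (hα : -1 < α) (t : ℝ) :
    Gamma (α + 1) * fermiDirac t 0 ≤ fermi α t := by
  have hint := (GammaIntegral_convergent (s := α + 1) (by linarith)).mul_const (fermiDirac t 0)
  rw [add_sub_cancel_right] at hint
  rw [Gamma_eq_integral (by linarith), add_sub_cancel_right, ← integral_mul_const,
    fermi_eq_integral]
  refine setIntegral_mono_on hint (integrableOn_rpow_mul t hα) measurableSet_Ioi fun x hx => ?_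
  calc exp (-x) * x ^ α * fermiDirac t 0 = x ^ α * (fermiDirac t 0 * exp (-x)) := by ring
    _ ≤ x ^ α * fermiDirac t x :=
        mul_le_mul_of_nonneg_left (zero_mul_exp_neg_le t (le_of_lt hx)) (rpow_nonneg hx.le α)

end

lemma mul_le_cbrt_six_div_pi_mul {s z μ η : ℝ} (hs₀ : 0 ≤ s) (hs₁ : s ≤ 1) (hz : 0 < z)
    (hμ : 0 < μ) (hη : 0 ≤ η) (hrel : μ ^ 2 * η ^ 3 = 8 / 3) (hs : √π / 2 * s ≤ 2 * z / μ) :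
    s * z ≤ (6 / π) ^ (1 / 3 : ℝ) * η * z ^ (5 / 3 : ℝ) := by
  have hsq : π * μ ^ 2 * s ^ 2 ≤ 16 * z ^ 2 := by
    have h : √π * μ * s ≤ 4 * z := by rw [le_div_iff₀ hμ] at hs; linarith
    have := pow_le_pow_left₀ (by positivity) h 2
    rwa [mul_pow, mul_pow, sq_sqrt pi_pos.le, mul_pow, show (4 : ℝ) ^ 2 = 16 by norm_num] at this
  have hC : ((6 / π) ^ (1 / 3 : ℝ)) ^ 3 = 6 / π := by
    rw [← rpow_natCast, ← rpow_mul (by positivity)]; norm_num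
  have hZ : (z ^ (5 / 3 : ℝ)) ^ 3 = z ^ 5 := by
    rw [← rpow_natCast, ← rpow_mul hz.le]; norm_num
  have hrhs : 6 / π * η ^ 3 * z ^ 5 = 16 * z ^ 5 / (π * μ ^ 2) := by
    field_simp
    linear_combination 6 * hrel
  have hcube : (s * z) ^ 3 ≤ ((6 / π) ^ (1 / 3 : ℝ) * η * z ^ (5 / 3 : ℝ)) ^ 3 := by
    rw [mul_pow, mul_pow, mul_pow, hC, hZ, hrhs, le_div_iff₀ (by positivity)]
    calc s ^ 3 * z ^ 3 * (π * μ ^ 2) = s * z ^ 3 * (π * μ ^ 2 * s ^ 2) := by ring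
      _ ≤ 1 * z ^ 3 * (16 * z ^ 2) := by gcongr
      _ = 16 * z ^ 5 := by ring
  exact le_of_pow_le_pow_left₀ three_ne_zero (by positivity) hcube

/-- there is a constant `C > 0`, independent of the parameters,
such that for all `η, μ > 0` with `μ² η³ = 8/3`, the Fermi–Dirac nonlinearity
`R(z) = (μ/4) f_{−1/2}(f_{1/2}^{−1}(2z/μ))` satisfies
`0 ≤ z − R(z) ≤ C η z^{5/3}` for all `z > 0` (stated via any `t` with
`f_{1/2}(t) = 2z/μ`). -/
theorem fd_R_estimate :
    ∃ C : ℝ, 0 < C ∧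
      ∀ η μ : ℝ, 0 < η → 0 < μ → μ ^ 2 * η ^ 3 = 8 / 3 →
        ∀ z : ℝ, 0 < z → ∀ t : ℝ, fermi (1 / 2) t = 2 * z / μ →
          0 ≤ z - μ / 4 * fermi (-(1 / 2)) t ∧
          z - μ / 4 * fermi (-(1 / 2)) t ≤ C * η * z ^ ((5 : ℝ) / 3) := by
  refine ⟨(6 / π) ^ (1 / 3 : ℝ), by positivity, fun η μ hη hμ hrel z hz t hF => ?_⟩
  have hdefect := fermi_sub_mul_fermi_sub_one (α := 1 / 2) (by norm_num) t
  rw [show (1 / 2 : ℝ) - 1 = -(1 / 2) by norm_num] at hdefect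
  have hR : z - μ / 4 * fermi (-(1 / 2)) t =
      μ / 2 * ∫ x in Ioi (0 : ℝ), x ^ (1 / 2 : ℝ) * fermiDirac t x ^ 2 := by
    rw [← hdefect, hF]
    field_simp
    ring
  have hGamma : Gamma (1 / 2 + 1) = √π / 2 := by
    rw [Gamma_add_one (by norm_num), Gamma_one_half_eq]; ring
  have hlower := Gamma_mul_fermiDirac_zero_le_fermi (α := 1 / 2) (by norm_num) t
  rw [hGamma, hF] at hlower
  rw [hR]
  refine ⟨mul_nonneg (by positivity) (setIntegral_nonneg measurableSet_Ioi fun x hx =>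
    mul_nonneg (rpow_nonneg (le_of_lt hx) _) (sq_nonneg _)), ?_⟩
  calc μ / 2 * ∫ x in Ioi (0 : ℝ), x ^ (1 / 2 : ℝ) * fermiDirac t x ^ 2
      ≤ μ / 2 * (fermiDirac t 0 * fermi (1 / 2) t) := by
        gcongr
        exact integral_rpow_mul_fermiDirac_sq_le (by norm_num) t
    _ = fermiDirac t 0 * z := by rw [hF]; field_simp
    _ ≤ (6 / π) ^ (1 / 3 : ℝ) * η * z ^ (5 / 3 : ℝ) :=
        mul_le_cbrt_six_div_pi_mul (fermiDirac.pos t 0).le (fermiDirac.le_one t 0) hz hμ hη.le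
          hrel hlower
end

section
/- For every α > −1, f_α(z) / (Γ(α + 1) e^z) → 1 as z → −∞, where f_α(z) = ∫₀^∞ x^α / (1 + exp(x − z)) dx and Γ is the Euler Gamma function; i.e. f_α(z) is asymptotically equivalent to Γ(α+1) e^z as z → −∞. -/
/-!
The Fermi integrand `x ^ α / (1 + exp (x - z))` differs from `e^z` times the Gamma integrand
`exp (-x) * x ^ α` by the factor `1 / (1 + exp (z - x))`, which for `x ≥ 0` lies between
`1 / (1 + e^z)` and `1`. Integrating gives `Γ(α+1) e^z / (1 + e^z) ≤ f_α(z) ≤ Γ(α+1) e^z`,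
and the lower factor tends to `1` as `z → −∞`.
-/

open Real Filter Set

open MeasureTheory

lemma one_div_one_add_exp_sub_le (x z : ℝ) : 1 / (1 + exp (x - z)) ≤ exp z * exp (-x) :=
  calc 1 / (1 + exp (x - z)) ≤ 1 / exp (x - z) :=
        one_div_le_one_div_of_le (exp_pos _) (by linarith)
    _ = exp z * exp (-x) := by rw [one_div, ← exp_neg, ← exp_add]; ring_nf

lemma exp_div_one_add_exp_mul_le {x : ℝ} (hx : 0 ≤ x) (z : ℝ) :
    exp z / (1 + exp z) * exp (-x) ≤ 1 / (1 + exp (x - z)) := by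
  have hprod : exp z * exp (-x) * exp (x - z) = 1 := by
    rw [← exp_add, ← exp_add]; ring_nf; exact exp_zero
  have hle : exp z * exp (-x) ≤ exp z := by
    rw [← exp_add]; exact exp_le_exp.2 (by linarith)
  rw [div_mul_eq_mul_div, div_le_div_iff₀ (by positivity) (by positivity)]
  nlinarith

lemma div_one_add_exp_sub_le_exp_mul {x : ℝ} (hx : 0 ≤ x) (α z : ℝ) :
    x ^ α / (1 + exp (x - z)) ≤ exp z * (exp (-x) * x ^ α) :=
  calc x ^ α / (1 + exp (x - z)) = x ^ α * (1 / (1 + exp (x - z))) := by ring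
    _ ≤ x ^ α * (exp z * exp (-x)) :=
        mul_le_mul_of_nonneg_left (one_div_one_add_exp_sub_le x z) (rpow_nonneg hx α)
    _ = exp z * (exp (-x) * x ^ α) := by ring

lemma exp_div_one_add_exp_mul_le_div_one_add_exp_sub {x : ℝ} (hx : 0 ≤ x) (α z : ℝ) :
    exp z / (1 + exp z) * (exp (-x) * x ^ α) ≤ x ^ α / (1 + exp (x - z)) :=
  calc exp z / (1 + exp z) * (exp (-x) * x ^ α) = x ^ α * (exp z / (1 + exp z) * exp (-x)) := by
        ring
    _ ≤ x ^ α * (1 / (1 + exp (x - z))) :=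
        mul_le_mul_of_nonneg_left (exp_div_one_add_exp_mul_le hx z) (rpow_nonneg hx α)
    _ = x ^ α / (1 + exp (x - z)) := by ring

section Fermi

variable {α : ℝ} (hα : -1 < α)
include hα

lemma integrableOn_exp_neg_mul_rpow : IntegrableOn (fun x => exp (-x) * x ^ α) (Ioi 0) := by
  simpa using GammaIntegral_convergent (s := α + 1) (by linarith)

lemma integral_exp_neg_mul_rpow_eq_Gamma : ∫ x in Ioi 0, exp (-x) * x ^ α = Gamma (α + 1) := by
  simp [Gamma_eq_integral (s := α + 1) (by linarith)]

lemma integrableOn_fermi_integrand (z : ℝ) :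
    IntegrableOn (fun x => x ^ α / (1 + exp (x - z))) (Ioi 0) := by
  refine ((integrableOn_exp_neg_mul_rpow hα).const_mul (exp z)).mono' ?_ ?_
  · refine ContinuousOn.aestronglyMeasurable ?_ measurableSet_Ioi
    refine ContinuousOn.div (fun x hx => ?_) (by fun_prop) (fun x _ => by positivity)
    exact (continuousAt_rpow_const x α (Or.inl (ne_of_gt hx))).continuousWithinAt
  · filter_upwards [ae_restrict_mem measurableSet_Ioi] with x (hx : 0 < x)
    rw [norm_of_nonneg (by positivity)]
    exact div_one_add_exp_sub_le_exp_mul hx.le α z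

lemma fermi_le_Gamma_mul_exp (z : ℝ) : fermi α z ≤ Gamma (α + 1) * exp z :=
  calc fermi α z ≤ ∫ x in Ioi 0, exp z * (exp (-x) * x ^ α) :=
        setIntegral_mono_on (integrableOn_fermi_integrand hα z)
          ((integrableOn_exp_neg_mul_rpow hα).const_mul _) measurableSet_Ioi
          fun x hx => div_one_add_exp_sub_le_exp_mul (le_of_lt hx) α z
    _ = Gamma (α + 1) * exp z := by
        rw [integral_const_mul, integral_exp_neg_mul_rpow_eq_Gamma hα, mul_comm]

lemma Gamma_mul_exp_div_le_fermi (z : ℝ) : Gamma (α + 1) * exp z / (1 + exp z) ≤ fermi α z :=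
  calc Gamma (α + 1) * exp z / (1 + exp z)
        = ∫ x in Ioi 0, exp z / (1 + exp z) * (exp (-x) * x ^ α) := by
        rw [integral_const_mul, integral_exp_neg_mul_rpow_eq_Gamma hα]; ring
    _ ≤ fermi α z :=
        setIntegral_mono_on ((integrableOn_exp_neg_mul_rpow hα).const_mul _)
          (integrableOn_fermi_integrand hα z) measurableSet_Ioi
          fun x hx => exp_div_one_add_exp_mul_le_div_one_add_exp_sub (le_of_lt hx) α z

end Fermi

lemma tendsto_one_div_one_add_exp_atBot :
    Tendsto (fun z => 1 / (1 + exp z)) atBot (nhds 1) := by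
  simpa using (tendsto_exp_atBot.const_add 1).inv₀ (by norm_num)

/-- for `α > −1`, `f_α(z) ∼ Γ(α+1) e^z` as `z → −∞`, i.e.
`f_α(z) / (Γ(α+1) e^z) → 1`. -/
theorem fermi_asymptotics_at_bot (α : ℝ) (hα : -1 < α) :
    Filter.Tendsto (fun z : ℝ => fermi α z / (Real.Gamma (α + 1) * Real.exp z))
      Filter.atBot (nhds 1) := by
  have hpos (z : ℝ) : 0 < Gamma (α + 1) * exp z :=
    mul_pos (Gamma_pos_of_pos (by linarith)) (exp_pos z)
  refine tendsto_of_tendsto_of_tendsto_of_le_of_le tendsto_one_div_one_add_exp_atBot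
    tendsto_const_nhds (fun z => ?_) (fun z => ?_)
  · rw [le_div_iff₀ (hpos z)]
    calc 1 / (1 + exp z) * (Gamma (α + 1) * exp z) = Gamma (α + 1) * exp z / (1 + exp z) := by
          ring
      _ ≤ fermi α z := Gamma_mul_exp_div_le_fermi hα z
  · exact (div_le_one (hpos z)).2 (fermi_le_Gamma_mul_exp hα z)
end
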